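/- Failure of the conditional K axiom in LCR: for every m ≥ 3 there exist a Kripke LCR model (over the truth-value set T with m elements), a world x of that model, and L≻-formulas φ, ψ, θ such that v_x((φ ≻ (ψ → θ)) → ((φ ≻ ψ) → (φ ≻ θ))) < 1; hence the schema CK is not valid in the class of Kripke LCR models. -/
import Mathlib


namespace LCR

/-- Łukasiewicz negation on ℝ. -/
noncomputable def lneg (a : ℝ) : ℝ := 1 - a

/-- Łukasiewicz implication on ℝ. -/
noncomputable def limp (a b : ℝ) : ℝ := min 1 (1 - a + b)

/-- Łukasiewicz strong conjunction ⊙ on ℝ. -/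
noncomputable def lodot (a b : ℝ) : ℝ := max 0 (a + b - 1)

/-- The truth-value set T = {0, 1/(m−1), …, 1}. -/
def Tset (m : ℕ) : Set ℝ := {a | ∃ i : Fin m, a = (i : ℝ) / ((m : ℝ) - 1)}

/-- The k-th truth value k/(m−1). -/
noncomputable def tv (m : ℕ) (k : Fin m) : ℝ := (k : ℝ) / ((m : ℝ) - 1)

/-- Formulas of the language L≻. -/
inductive Formula : Type where
  | var  : ℕ → Formula
  | neg  : Formula → Formula
  | imp  : Formula → Formula → Formula
  | cond : Formula → Formula → Formula
deriving DecidableEq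

namespace Formula
/-- φ ∨ ψ := (φ → ψ) → ψ. -/
def or (φ ψ : Formula) : Formula := .imp (.imp φ ψ) ψ
/-- φ ∧ ψ := ¬(¬φ ∨ ¬ψ). -/
def and (φ ψ : Formula) : Formula := .neg (Formula.or (.neg φ) (.neg ψ))
/-- φ ↔ ψ := (φ → ψ) ∧ (ψ → φ). -/
def iff (φ ψ : Formula) : Formula := Formula.and (.imp φ ψ) (.imp ψ φ)
end Formula

/-- Purely propositional (¬,→)-formulas. -/
inductive PForm : Type where
  | var : ℕ → PForm
  | neg : PForm → PForm
  | imp : PForm → PForm → PForm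

/-- Evaluation of a propositional formula under an assignment. -/
noncomputable def PForm.eval (σ : ℕ → ℝ) : PForm → ℝ
  | .var n => σ n
  | .neg φ => lneg (PForm.eval σ φ)
  | .imp φ ψ => limp (PForm.eval σ φ) (PForm.eval σ ψ)

/-- Tautology of Łukasiewicz m-valued propositional logic. -/
def PForm.Taut (m : ℕ) (φ : PForm) : Prop :=
  ∀ σ : ℕ → ℝ, (∀ n, σ n ∈ Tset m) → PForm.eval σ φ = 1

/-- Substitution of L≻-formulas for the variables of a propositional formula. -/
def PForm.subst (σ : ℕ → Formula) : PForm → Formula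
  | .var n => σ n
  | .neg φ => .neg (PForm.subst σ φ)
  | .imp φ ψ => .imp (PForm.subst σ φ) (PForm.subst σ ψ)

/-- `J` is a family of Rosser–Turquette J-operators: each `J a` is obtained by substitution
into a (¬,→)-definable one-place connective whose value is 1 at inputs equal to `tv m a`
and 0 at all other truth values. -/
def IsJFamily (m : ℕ) (J : Fin m → Formula → Formula) : Prop :=
  ∃ P : Fin m → PForm,
    (∀ a φ, J a φ = PForm.subst (fun _ => φ) (P a)) ∧
    (∀ (a : Fin m) (σ : ℕ → ℝ), (∀ n, σ n ∈ Tset m) →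
      PForm.eval σ (P a) = if σ 0 = tv m a then 1 else 0)

/-- `I` is a family of threshold operators: each `I a` is obtained by substitution into a
(¬,→)-definable one-place connective whose value is 1 at inputs ≥ `tv m a` and 0 otherwise. -/
def IsIFamily (m : ℕ) (I : Fin m → Formula → Formula) : Prop :=
  ∃ P : Fin m → PForm,
    (∀ a φ, I a φ = PForm.subst (fun _ => φ) (P a)) ∧
    (∀ (a : Fin m) (σ : ℕ → ℝ), (∀ n, σ n ∈ Tset m) →
      PForm.eval σ (P a) = if tv m a ≤ σ 0 then 1 else 0)

/-- The index of aᵢ = (m−i)/(m−1) for i = j+1, i.e. m−1−j. -/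
def revIdx {m : ℕ} (j : Fin m) : Fin m := ⟨m - 1 - j.1, by have := j.isLt; omega⟩

/-- Index-level strong conjunction: tv (odotIdx a b) = tv a ⊙ tv b. -/
def odotIdx {m : ℕ} (a b : Fin m) : Fin m :=
  ⟨a.1 + b.1 - (m - 1), by have := a.isLt; have := b.isLt; omega⟩

/-- Nested implication →ⁿᵢ₌₁(φᵢ, ψ) = φₙ → (φₙ₋₁ → (⋯ → (φ₁ → ψ))), with φᵢ = f (i−1). -/
def nestImp : (n : ℕ) → (Fin n → Formula) → Formula → Formula
  | 0, _, ψ => ψ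
  | n+1, f, ψ => .imp (f (Fin.last n)) (nestImp n (fun i => f i.castSucc) ψ)

/-- Theorems of the system LCR (relative to the I-operators used in the rules R_a). -/
inductive Thm (m : ℕ) (I : Fin m → Formula → Formula) : Formula → Prop where
  | taut : ∀ (ψ : PForm) (σ : ℕ → Formula), PForm.Taut m ψ → Thm m I (PForm.subst σ ψ)
  | a1 : ∀ φ ψ θ : Formula,
      Thm m I (.imp (.cond φ (ψ.and θ)) ((Formula.cond φ ψ).and (.cond φ θ)))
  | a2 : ∀ φ ψ θ : Formula,
      Thm m I (.imp ((Formula.cond φ ψ).and (.cond φ θ)) (.cond φ (ψ.and θ)))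
  | a3 : ∀ (φ : Formula) (p : ℕ), Thm m I (.cond φ (.imp (.var p) (.var p)))
  | mp : ∀ φ ψ : Formula, Thm m I (.imp φ ψ) → Thm m I φ → Thm m I ψ
  | rcea : ∀ φ ψ θ : Formula,
      Thm m I (φ.iff ψ) → Thm m I ((Formula.cond φ θ).iff (.cond ψ θ))
  | rcec : ∀ φ ψ θ : Formula,
      Thm m I (φ.iff ψ) → Thm m I ((Formula.cond θ φ).iff (.cond θ ψ))
  | ra : ∀ (a : Fin m) (φ : Formula) (γ : Fin m → Formula) (δ : Formula),
      (∀ b : Fin m,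
        Thm m I (nestImp m (fun j => I (odotIdx (revIdx j) b) (γ j)) (I (odotIdx a b) δ))) →
      Thm m I (nestImp m (fun j => I (revIdx j) (.cond φ (γ j))) (I a (.cond φ δ)))

/-- Γ ⊢_LCR φ : derivability from Γ by theorems of LCR and modus ponens. -/
inductive Deriv (m : ℕ) (I : Fin m → Formula → Formula) (Γ : Set Formula) : Formula → Prop where
  | thm : ∀ φ, Thm m I φ → Deriv m I Γ φ
  | mem : ∀ φ, φ ∈ Γ → Deriv m I Γ φ
  | mp : ∀ φ ψ, Deriv m I Γ (.imp φ ψ) → Deriv m I Γ φ → Deriv m I Γ ψ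

/-- A Kripke LCR model over a set of worlds W. -/
structure Model (m : ℕ) (W : Type) : Type where
  ne : Nonempty W
  R : (Fin m → Set W) → W → W → ℝ
  R_mem : ∀ X x y, R X x y ∈ Tset m
  v : ℕ → W → ℝ
  v_mem : ∀ p x, v p x ∈ Tset m

/-- Valuation of formulas in a Kripke LCR model. -/
noncomputable def Model.val {m : ℕ} {W : Type} (M : Model m W) : Formula → W → ℝ
  | .var p, x => M.v p x
  | .neg φ, x => lneg (M.val φ x)
  | .imp φ ψ, x => limp (M.val φ x) (M.val ψ x)
  | .cond φ ψ, x =>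
      sInf (Set.range fun y : W =>
        limp (M.R (fun i => {z : W | M.val φ z = tv m i}) x y) (M.val ψ y))

/-- Semantic consequence Γ ⊨ φ over all Kripke LCR models. -/
def Entails (m : ℕ) (Γ : Set Formula) (φ : Formula) : Prop :=
  ∀ (W : Type) (M : Model m W) (x : W), (∀ ψ ∈ Γ, M.val ψ x = 1) → M.val φ x = 1

/-- Syntactic consistency. -/
def Consistent (m : ℕ) (I : Fin m → Formula → Formula) (Γ : Set Formula) : Prop :=
  ¬ ∃ φ : Formula, Deriv m I Γ φ ∧ Deriv m I Γ (.neg φ)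

/-- Maximal consistency. -/
def MaxConsistent (m : ℕ) (I : Fin m → Formula → Formula) (Γ : Set Formula) : Prop :=
  Consistent m I Γ ∧ ∀ φ : Formula, Deriv m I Γ φ → φ ∈ Γ


/-- failure of the conditional K axiom: for every m ≥ 3 there are a Kripke
LCR model, a world x and formulas φ, ψ, θ with
v_x((φ ≻ (ψ → θ)) → ((φ ≻ ψ) → (φ ≻ θ))) < 1. -/
theorem ck_fails (m : ℕ) (hm : 3 ≤ m) :
    ∃ (W : Type) (M : Model m W) (x : W) (φ ψ θ : Formula),
      M.val (.imp (.cond φ (.imp ψ θ))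
        (.imp (.cond φ ψ) (.cond φ θ))) x < 1 := by
  have hm1 : (1:ℝ) ≤ (m:ℝ) - 1 := by
    have : (3:ℝ) ≤ (m:ℝ) := by exact_mod_cast hm
    linarith
  set ε : ℝ := 1 / ((m:ℝ) - 1) with hε
  have hεpos : 0 < ε := by positivity
  have hεle : ε ≤ 1/2 := by
    rw [hε, div_le_div_iff₀ (by linarith) (by norm_num)]
    have : (3:ℝ) ≤ (m:ℝ) := by exact_mod_cast hm
    linarith
  have hmem1 : ε ∈ Tset m := ⟨⟨1, by omega⟩, by simp [hε]⟩
  have hmem0 : (0:ℝ) ∈ Tset m := ⟨⟨0, by omega⟩, by simp⟩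
  refine ⟨Unit,
    { ne := ⟨()⟩
      R := fun _ _ _ => ε
      R_mem := fun _ _ _ => hmem1
      v := fun p _ => if p = 0 then ε else 0
      v_mem := fun p x => by
        by_cases h : p = 0
        · simpa [h] using hmem1
        · simpa [h] using hmem0 }, (), .var 2, .var 0, .var 1, ?_⟩
  have hrange : ∀ f : Unit → ℝ, sInf (Set.range f) = f () := by
    intro f
    rw [Set.range_unique, csInf_singleton]
  simp only [Model.val, hrange, limp, lneg]
  norm_num
  have ha : (1:ℝ) ⊓ (1 - ε) = 1 - ε := min_eq_right (by linarith)
  rw [ha]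
  have hb : (1:ℝ) ⊓ (1 - ε + (1 - ε)) = 1 := min_eq_left (by linarith)
  rw [hb]
  linarith

end LCR
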